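/- arXiv:2510.16074 — 5 statements merged into one kernel-verified Lean document; each statement's English description precedes it below -/
import Mathlib

section
/- Let α > 1 and x_min > 0, and let X_1, X_2, … be i.i.d. random variables distributed according to the power-law distribution with exponent α and threshold x_min. Let α̂_n = 1 + n·(Σ_{i=1}^n ln(X_i/x_min))^(−1). Then α̂_n − α = O_p(1/√n), i.e., the sequence √n·(α̂_n − α) is bounded in probability. -/
open MeasureTheory ProbabilityTheory Real Filter Finset

/-- The power-law probability measure with exponent `α` and threshold `xmin`:
the measure on `[xmin, ∞)` with density `((α−1)/xmin) · (x/xmin)^(−α)`. -/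
noncomputable def powerLawMeasure (α xmin : ℝ) : Measure ℝ :=
  volume.withDensity fun x =>
    ENNReal.ofReal (if xmin ≤ x then ((α - 1) / xmin) * (x / xmin) ^ (-α) else 0)

/-- The maximum likelihood estimator `α̂_n = 1 + n · (Σ_{i=1}^n ln(X_i/xmin))⁻¹`. -/
noncomputable def mleExponent {Ω : Type*} (X : ℕ → Ω → ℝ) (xmin : ℝ) (n : ℕ) (ω : Ω) : ℝ :=
  1 + n / (∑ i ∈ Finset.range n, Real.log (X i ω / xmin))

/-! The variables `log (X_i / xmin)` are exponential with rate `α - 1`: they have mean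
`(α - 1)⁻¹` and finite variance. By Chebyshev's inequality their sum `S_n` deviates from
`n / (α - 1)` by at most `c √n` outside an event of probability `Var / c²`. On the good event
`S_n ≥ n / (2 (α - 1))` once `√n ≥ 2 c (α - 1)`, whence
`|α̂_n - α| = (α - 1) |S_n - n / (α - 1)| / S_n ≤ 2 c (α - 1)² / √n`. -/

open Set Topology

section Chebyshev

variable {Ω : Type*} [MeasurableSpace Ω] {μ : Measure Ω} [IsFiniteMeasure μ]

lemma measure_le_abs_sum_range_sub_le {Y : ℕ → Ω → ℝ} (hY : MemLp (Y 0) 2 μ)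
    (hindep : Pairwise fun i j => Y i ⟂ᵢ[μ] Y j) (hident : ∀ i, IdentDistrib (Y i) (Y 0) μ μ)
    {c : ℝ} (hc : 0 < c) {n : ℕ} (hn : n ≠ 0) :
    μ {ω | c * √n ≤ |∑ i ∈ range n, Y i ω - n * μ[Y 0]|}
      ≤ ENNReal.ofReal (Var[Y 0; μ] / c ^ 2) := by
  have hmem : ∀ i ∈ range n, MemLp (Y i) 2 μ := fun i _ => (hident i).memLp_iff.2 hY
  have hmean : μ[∑ i ∈ range n, Y i] = (n : ℝ) * μ[Y 0] := by
    simp only [Finset.sum_apply]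
    rw [integral_finsetSum _ fun i hi => (hmem i hi).integrable one_le_two]
    simp [fun i => (hident i).integral_eq]
  have hvar : Var[∑ i ∈ range n, Y i; μ] = n * Var[Y 0; μ] := by
    rw [IndepFun.variance_sum hmem fun i _ j _ hij => hindep hij]
    simp [fun i => (hident i).variance_eq]
  calc μ {ω | c * √n ≤ |∑ i ∈ range n, Y i ω - n * μ[Y 0]|}
      = μ {ω | c * √n ≤ |(∑ i ∈ range n, Y i) ω - μ[∑ i ∈ range n, Y i]|} := by
        rw [hmean]; simp only [Finset.sum_apply]
    _ ≤ ENNReal.ofReal (Var[∑ i ∈ range n, Y i; μ] / (c * √n) ^ 2) :=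
        meas_ge_le_variance_div_sq (memLp_finsetSum' _ hmem) (by positivity)
    _ = ENNReal.ofReal (Var[Y 0; μ] / c ^ 2) := by
        have : (n : ℝ) ≠ 0 := Nat.cast_ne_zero.2 hn
        rw [hvar, mul_pow, sq_sqrt n.cast_nonneg]
        field_simp

end Chebyshev

lemma abs_div_sub_le_of_abs_sub_lt {β c n S : ℝ} (hβ : 0 < β) (hcn : 2 * c * β ≤ √n)
    (hS : |S - n * β⁻¹| < c * √n) : |n / S - β| ≤ 2 * c * β ^ 2 / √n := by
  have hdev : 0 < c * √n := (abs_nonneg _).trans_lt hS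
  set q := √n
  have hq : 0 < q := lt_of_le_of_ne (sqrt_nonneg n) fun h => by simp [← h] at hdev
  have hn : q * q = n := mul_self_sqrt (sqrt_pos.1 hq).le
  have hdev_le : c * q ≤ n * β⁻¹ / 2 :=
    calc c * q = 2 * c * β * q * β⁻¹ / 2 := by field_simp
      _ ≤ q * q * β⁻¹ / 2 := by gcongr
      _ = n * β⁻¹ / 2 := by rw [hn]
  have hhalf : 0 < n * β⁻¹ / 2 := by rw [← hn]; positivity
  have hS_lower : n * β⁻¹ / 2 < S := by linarith [(abs_lt.1 hS).1]
  have hS_pos : 0 < S := hhalf.trans hS_lower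
  calc |n / S - β| = β * |S - n * β⁻¹| / S := by
        rw [show n / S - β = β * (n * β⁻¹ - S) / S by field_simp, abs_div, abs_mul,
          abs_of_pos hβ, abs_of_pos hS_pos, abs_sub_comm]
    _ ≤ β * (c * q) / (n * β⁻¹ / 2) := by gcongr
    _ = 2 * c * β ^ 2 / q := by
        rw [← hn]
        field_simp

lemma tendsto_log_pow_mul_rpow_neg_atTop {s : ℝ} (hs : 0 < s) (k : ℕ) :
    Tendsto (fun t => log t ^ k * t ^ (-s)) atTop (𝓝 0) := by
  refine (isLittleO_log_rpow_rpow_atTop k hs).tendsto_div_nhds_zero.congr' ?_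
  filter_upwards [eventually_gt_atTop 0] with t ht
  rw [rpow_natCast, rpow_neg ht.le, div_eq_mul_inv]

section PowerLaw

variable {α xmin : ℝ}

noncomputable def powerLawDensity (α xmin x : ℝ) : ℝ := (α - 1) / xmin * (x / xmin) ^ (-α)

lemma measurable_powerLawDensity : Measurable (powerLawDensity α xmin) := by
  unfold powerLawDensity
  fun_prop

lemma powerLawDensity_nonneg (hα : 1 ≤ α) (hxmin : 0 < xmin) {x : ℝ} (hx : 0 ≤ x) :
    0 ≤ powerLawDensity α xmin x :=
  mul_nonneg (div_nonneg (by linarith) hxmin.le) (rpow_nonneg (div_nonneg hx hxmin.le) _)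

lemma powerLawMeasure_eq_withDensity (α xmin : ℝ) :
    powerLawMeasure α xmin = (volume.restrict (Ioi xmin)).withDensity
      fun x => ENNReal.ofReal (powerLawDensity α xmin x) := by
  rw [restrict_Ioi_eq_restrict_Ici, ← withDensity_indicator measurableSet_Ici, powerLawMeasure]
  congr with x
  by_cases h : xmin ≤ x <;> simp [h, powerLawDensity]

lemma integral_powerLawMeasure (hα : 1 ≤ α) (hxmin : 0 < xmin) (g : ℝ → ℝ) :
    ∫ x, g x ∂powerLawMeasure α xmin = ∫ x in Ioi xmin, powerLawDensity α xmin x * g x := by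
  rw [powerLawMeasure_eq_withDensity, integral_withDensity_eq_integral_toReal_smul
    measurable_powerLawDensity.ennreal_ofReal (ae_of_all _ fun _ => ENNReal.ofReal_lt_top)]
  refine setIntegral_congr_fun measurableSet_Ioi fun x hx => ?_
  rw [ENNReal.toReal_ofReal (powerLawDensity_nonneg hα hxmin (hxmin.trans hx).le), smul_eq_mul]

lemma integrable_powerLawMeasure_iff (hα : 1 ≤ α) (hxmin : 0 < xmin) {g : ℝ → ℝ} :
    Integrable g (powerLawMeasure α xmin)
      ↔ IntegrableOn (fun x => powerLawDensity α xmin x * g x) (Ioi xmin) := by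
  rw [powerLawMeasure_eq_withDensity, integrable_withDensity_iff
    measurable_powerLawDensity.ennreal_ofReal (ae_of_all _ fun _ => ENNReal.ofReal_lt_top)]
  refine integrableOn_congr_fun (fun x hx => ?_) measurableSet_Ioi
  rw [ENNReal.toReal_ofReal (powerLawDensity_nonneg hα hxmin (hxmin.trans hx).le), mul_comm]

/-- For `Q = a L² + b L + c` in `L = log (x / xmin)` the derivative is
`powerLawDensity · (Q - Q' / (α - 1))`, so suitable `a b c` give a primitive of
`powerLawDensity · L ^ k`. -/
noncomputable def powerLawLogPrimitive (α xmin a b c x : ℝ) : ℝ :=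
  -(x / xmin) ^ (1 - α) * (a * log (x / xmin) ^ 2 + b * log (x / xmin) + c)

lemma hasDerivAt_powerLawLogPrimitive (a b c : ℝ) (hxmin : 0 < xmin) {x : ℝ} (hx : 0 < x) :
    HasDerivAt (powerLawLogPrimitive α xmin a b c)
      (powerLawDensity α xmin x * (a * log (x / xmin) ^ 2 + b * log (x / xmin) + c)
        - (x / xmin) ^ (-α) / xmin * (2 * a * log (x / xmin) + b)) x := by
  have ht : 0 < x / xmin := div_pos hx hxmin
  have hdiv : HasDerivAt (fun y => y / xmin) xmin⁻¹ x := by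
    simpa using (hasDerivAt_id x).div_const xmin
  have hlog := hdiv.log ht.ne'
  have hpoly := (((hlog.fun_pow 2).const_mul a).fun_add (hlog.const_mul b)).add_const c
  refine ((hdiv.rpow_const (p := 1 - α) (Or.inl ht.ne')).fun_neg.fun_mul hpoly).congr_deriv ?_
  rw [show (x / xmin) ^ (1 - α) = x / xmin * (x / xmin) ^ (-α) by
      rw [sub_eq_add_neg, rpow_add ht, rpow_one],
    show 1 - α - 1 = -α by ring]
  unfold powerLawDensity
  field_simp
  ring

lemma tendsto_powerLawLogPrimitive_atTop (hα : 1 < α) (hxmin : 0 < xmin) (a b c : ℝ) :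
    Tendsto (powerLawLogPrimitive α xmin a b c) atTop (𝓝 0) := by
  have h := fun k => tendsto_log_pow_mul_rpow_neg_atTop (sub_pos.2 hα) k
  have hsum := (((h 2).const_mul a).add ((h 1).const_mul b)).add ((h 0).const_mul c) |>.neg
  simp only [mul_zero, add_zero, neg_zero] at hsum
  refine (hsum.comp (tendsto_id.atTop_div_const hxmin)).congr fun x => ?_
  simp only [Function.comp_apply, id, powerLawLogPrimitive, neg_sub, pow_one, pow_zero, one_mul]
  ring

lemma integral_Ioi_powerLawDensity_mul_log (hα : 1 < α) (hxmin : 0 < xmin) :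
    ∫ x in Ioi xmin, powerLawDensity α xmin x * log (x / xmin) = (α - 1)⁻¹ := by
  have hβ : α - 1 ≠ 0 := (sub_pos.2 hα).ne'
  have hderiv : ∀ x ∈ Ici xmin, HasDerivAt (powerLawLogPrimitive α xmin 0 1 (α - 1)⁻¹)
      (powerLawDensity α xmin x * log (x / xmin)) x := fun x hx =>
    (hasDerivAt_powerLawLogPrimitive 0 1 _ hxmin (hxmin.trans_le hx)).congr_deriv (by
      unfold powerLawDensity; field_simp; ring)
  rw [integral_Ioi_of_hasDerivAt_of_nonneg' hderiv (fun x hx => mul_nonneg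
      (powerLawDensity_nonneg hα.le hxmin (hxmin.trans hx).le)
      (log_nonneg ((one_le_div hxmin).2 hx.out.le)))
    (tendsto_powerLawLogPrimitive_atTop hα hxmin _ _ _)]
  simp [powerLawLogPrimitive, div_self hxmin.ne']

lemma integrableOn_Ioi_powerLawDensity_mul_log_sq (hα : 1 < α) (hxmin : 0 < xmin) :
    IntegrableOn (fun x => powerLawDensity α xmin x * log (x / xmin) ^ 2) (Ioi xmin) := by
  have hβ : α - 1 ≠ 0 := (sub_pos.2 hα).ne'
  have hderiv : ∀ x ∈ Ici xmin,
      HasDerivAt (powerLawLogPrimitive α xmin 1 (2 / (α - 1)) (2 / (α - 1) ^ 2))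
        (powerLawDensity α xmin x * log (x / xmin) ^ 2) x := fun x hx =>
    (hasDerivAt_powerLawLogPrimitive 1 _ _ hxmin (hxmin.trans_le hx)).congr_deriv (by
      unfold powerLawDensity; field_simp; ring)
  exact integrableOn_Ioi_deriv_of_nonneg' hderiv (fun x hx => mul_nonneg
      (powerLawDensity_nonneg hα.le hxmin (hxmin.trans hx).le) (sq_nonneg _))
    (tendsto_powerLawLogPrimitive_atTop hα hxmin _ _ _)

lemma integral_log_div_powerLawMeasure (hα : 1 < α) (hxmin : 0 < xmin) :
    ∫ x, log (x / xmin) ∂powerLawMeasure α xmin = (α - 1)⁻¹ := by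
  rw [integral_powerLawMeasure hα.le hxmin, integral_Ioi_powerLawDensity_mul_log hα hxmin]

lemma memLp_log_div_powerLawMeasure (hα : 1 < α) (hxmin : 0 < xmin) :
    MemLp (fun x => log (x / xmin)) 2 (powerLawMeasure α xmin) := by
  rw [memLp_two_iff_integrable_sq (by fun_prop : Measurable _).aestronglyMeasurable,
    integrable_powerLawMeasure_iff hα.le hxmin]
  exact integrableOn_Ioi_powerLawDensity_mul_log_sq hα hxmin

end PowerLaw

theorem stmt2 {Ω : Type*} [MeasurableSpace Ω] (μ : Measure Ω) [IsProbabilityMeasure μ]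
    (α xmin : ℝ) (hα : 1 < α) (hxmin : 0 < xmin)
    (X : ℕ → Ω → ℝ) (hmeas : ∀ i, Measurable (X i))
    (hindep : iIndepFun X μ)
    (hdist : ∀ i, Measure.map (X i) μ = powerLawMeasure α xmin) :
    ∀ ε : ℝ, 0 < ε → ∃ C : ℝ, 0 < C ∧ ∃ N : ℕ, ∀ n ≥ N,
      μ {ω | |mleExponent X xmin n ω - α| > C / Real.sqrt n} < ENNReal.ofReal ε := by
  intro ε hε
  have hβ : 0 < α - 1 := sub_pos.2 hα
  have hf : Measurable fun x => log (x / xmin) := by fun_prop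
  set Y : ℕ → Ω → ℝ := fun i ω => log (X i ω / xmin)
  have hident : ∀ i, IdentDistrib (Y i) (Y 0) μ μ := fun i =>
    (IdentDistrib.mk (hmeas i).aemeasurable (hmeas 0).aemeasurable (by rw [hdist, hdist])).comp hf
  have hY : MemLp (Y 0) 2 μ :=
    (memLp_map_measure_iff hf.aestronglyMeasurable (hmeas 0).aemeasurable).1
      (hdist 0 ▸ memLp_log_div_powerLawMeasure hα hxmin)
  have hmean : μ[Y 0] = (α - 1)⁻¹ := by
    rw [← integral_log_div_powerLawMeasure hα hxmin, ← hdist 0,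
      integral_map (hmeas 0).aemeasurable hf.aestronglyMeasurable]
  obtain ⟨c, hcε, hc⟩ : ∃ c, Var[Y 0; μ] / c ^ 2 < ε ∧ 0 < c :=
    (((tendsto_const_nhds.div_atTop (tendsto_pow_atTop two_ne_zero)).eventually
      (gt_mem_nhds hε)).and (eventually_gt_atTop 0)).exists
  obtain ⟨N, hN⟩ := eventually_atTop.1 <|
    ((tendsto_sqrt_atTop.comp tendsto_natCast_atTop_atTop).eventually_ge_atTop
      (2 * c * (α - 1))).and (eventually_ne_atTop 0)
  refine ⟨2 * c * (α - 1) ^ 2, by positivity, N, fun n hn => ?_⟩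
  calc μ {ω | |mleExponent X xmin n ω - α| > 2 * c * (α - 1) ^ 2 / √n}
      ≤ μ {ω | c * √n ≤ |∑ i ∈ range n, Y i ω - n * μ[Y 0]|} := by
        refine measure_mono fun ω hω => ?_
        have hmle : mleExponent X xmin n ω - α = n / ∑ i ∈ range n, Y i ω - (α - 1) := by
          unfold mleExponent
          ring
        by_contra hgood
        rw [mem_ofPred_eq, not_le, hmean] at hgood
        exact (abs_div_sub_le_of_abs_sub_lt hβ (hN n hn).1 hgood).not_gt (hmle ▸ hω)
    _ ≤ ENNReal.ofReal (Var[Y 0; μ] / c ^ 2) :=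
        measure_le_abs_sum_range_sub_le hY (fun i j hij => (hindep.indepFun hij).comp hf hf)
          hident hc (hN n hn).2
    _ < ENNReal.ofReal ε := (ENNReal.ofReal_lt_ofReal_iff hε).2 hcε
end

section
/- Let x_min > 0 and let 1 < α ≤ β. Then sup_{x ≥ x_min} |F(x; α, x_min) − F(x; β, x_min)| = sup_{x ≥ x_min} |(x/x_min)^{1−α} − (x/x_min)^{1−β}| ≤ (β − α) / (e·(α − 1)). In particular, the map α ↦ F(·; α, x_min) is locally Lipschitz in the supremum norm, so if α̂_n − α = O_p(1/√n) then sup_{x ≥ x_min} |F(x; α, x_min) − F(x; α̂_n, x_min)| = O_p(1/√n). -/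
open MeasureTheory Real Filter

/-- The power-law cumulative distribution function `F(x; α, xmin) = 1 − (x/xmin)^(1−α)`. -/
noncomputable def plCDF (α xmin x : ℝ) : ℝ := 1 - (x / xmin) ^ (1 - α)

lemma exp_aux {p q u : ℝ} (hp : 0 < p) (hpq : p ≤ q) (hu : 0 ≤ u) :
    Real.exp (-(p*u)) - Real.exp (-(q*u)) ≤ (q - p) / (Real.exp 1 * p) := by
  have h1 : Real.exp (-(q*u)) = Real.exp (-(p*u)) * Real.exp (-((q-p)*u)) := by
    rw [← Real.exp_add]; ring_nf
  have h2 : 1 - (q-p)*u ≤ Real.exp (-((q-p)*u)) := by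
    have := Real.add_one_le_exp (-((q-p)*u)); linarith
  have h3 : p * u ≤ Real.exp (p*u) * Real.exp (-1) := by
    have h := Real.add_one_le_exp (p*u - 1)
    calc p * u ≤ Real.exp (p*u - 1) := by linarith
    _ = Real.exp (p*u) * Real.exp (-1) := by rw [← Real.exp_add]; ring_nf
  have h4 : p * u * Real.exp (-(p*u)) ≤ Real.exp (-1) := by
    have hpos : 0 < Real.exp (-(p*u)) := Real.exp_pos _
    have := mul_le_mul_of_nonneg_right h3 hpos.le
    calc p * u * Real.exp (-(p*u)) ≤ Real.exp (p*u) * Real.exp (-1) * Real.exp (-(p*u)) := this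
    _ = Real.exp (-1) := by rw [mul_comm (Real.exp (p*u)), mul_assoc, ← Real.exp_add]; simp
  have hep : 0 < Real.exp (-(p*u)) := Real.exp_pos _
  have step1 : Real.exp (-(p*u)) - Real.exp (-(q*u)) ≤ (q-p) * u * Real.exp (-(p*u)) := by
    rw [h1]; nlinarith [hep, h2]
  have step2 : (q-p) * u * Real.exp (-(p*u)) ≤ (q - p) / (Real.exp 1 * p) := by
    have hqp : 0 ≤ q - p := by linarith
    have : (q-p) * u * Real.exp (-(p*u)) = (q-p)/p * (p * u * Real.exp (-(p*u))) := by
      field_simp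
    rw [this]
    have h5 : (q-p)/p * (p * u * Real.exp (-(p*u))) ≤ (q-p)/p * Real.exp (-1) := by
      apply mul_le_mul_of_nonneg_left h4 (div_nonneg hqp hp.le)
    refine h5.trans (le_of_eq ?_)
    rw [Real.exp_neg]
    field_simp
  linarith

lemma pointwise_bound {xmin a b x : ℝ} (hx : 0 < xmin) (ha : 1 < a) (hab : a ≤ b)
    (hxx : xmin ≤ x) :
    |plCDF a xmin x - plCDF b xmin x| ≤ (b - a) / (Real.exp 1 * (a - 1)) := by
  set t := x / xmin with htdef
  have ht : 1 ≤ t := (one_le_div hx).2 hxx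
  have ht0 : 0 < t := lt_of_lt_of_le one_pos ht
  have hlog : 0 ≤ Real.log t := Real.log_nonneg ht
  have e1 : t ^ (1-a) = Real.exp (-((a-1) * Real.log t)) := by
    rw [Real.rpow_def_of_pos ht0]; congr 1; ring
  have e2 : t ^ (1-b) = Real.exp (-((b-1) * Real.log t)) := by
    rw [Real.rpow_def_of_pos ht0]; congr 1; ring
  have habs : plCDF a xmin x - plCDF b xmin x = t^(1-b) - t^(1-a) := by
    simp only [plCDF, ← htdef]; ring
  have hmono : t^(1-b) ≤ t^(1-a) :=
    Real.rpow_le_rpow_of_exponent_le ht (by linarith)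
  rw [habs, abs_sub_comm, abs_of_nonneg (sub_nonneg.2 hmono), e1, e2]
  exact (exp_aux (show (0:ℝ) < a - 1 by linarith) (show a - 1 ≤ b - 1 by linarith) hlog).trans
    (le_of_eq (by ring))

lemma sup_bound {xmin a b : ℝ} (hx : 0 < xmin) (ha : 1 < a) (hab : a ≤ b) :
    (⨆ x : Set.Ici xmin, |plCDF a xmin (x : ℝ) - plCDF b xmin (x : ℝ)|) ≤
      (b - a) / (Real.exp 1 * (a - 1)) := by
  haveI : Nonempty (Set.Ici xmin) := ⟨⟨xmin, le_refl xmin⟩⟩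
  exact ciSup_le fun x => pointwise_bound hx ha hab x.2

theorem stmt6 (xmin α β : ℝ) (hxmin : 0 < xmin) (hα : 1 < α) (hαβ : α ≤ β) :
    ((⨆ x : Set.Ici xmin, |plCDF α xmin x - plCDF β xmin x|) =
      ⨆ x : Set.Ici xmin, |((x : ℝ) / xmin) ^ (1 - α) - ((x : ℝ) / xmin) ^ (1 - β)|) ∧
    ((⨆ x : Set.Ici xmin, |plCDF α xmin x - plCDF β xmin x|) ≤
      (β - α) / (Real.exp 1 * (α - 1))) ∧
    (∀ (Ω : Type) [MeasurableSpace Ω] (μ : Measure Ω), IsProbabilityMeasure μ →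
      ∀ αhat : ℕ → Ω → ℝ,
        (∀ ε : ℝ, 0 < ε → ∃ C : ℝ, 0 < C ∧ ∃ N : ℕ, ∀ n ≥ N,
          μ {ω | |αhat n ω - α| > C / Real.sqrt n} < ENNReal.ofReal ε) →
        (∀ ε : ℝ, 0 < ε → ∃ C : ℝ, 0 < C ∧ ∃ N : ℕ, ∀ n ≥ N,
          μ {ω | (⨆ x : Set.Ici xmin, |plCDF α xmin x - plCDF (αhat n ω) xmin x|) >
            C / Real.sqrt n} < ENNReal.ofReal ε)) := by
  have hα1 : 0 < α - 1 := by linarith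
  refine ⟨?_, sup_bound hxmin hα hαβ, ?_⟩
  · congr 1; funext x
    have h : plCDF α xmin (x : ℝ) - plCDF β xmin (x : ℝ) =
        ((x : ℝ)/xmin)^(1-β) - ((x : ℝ)/xmin)^(1-α) := by
      simp only [plCDF]; ring
    rw [h, abs_sub_comm]
  · intro Ω _ μ hμ αhat h ε hε
    obtain ⟨C, hC, N, hN⟩ := h ε hε
    set K := 2 / (Real.exp 1 * (α - 1)) with hK
    have hE : 0 < Real.exp 1 * (α - 1) := by positivity
    have hKpos : 0 < K := by positivity
    refine ⟨C * K + 1, by positivity, max N (⌈(2*C/(α-1))^2⌉₊ + 1), fun n hn => ?_⟩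
    have hnN : n ≥ N := le_trans (le_max_left _ _) hn
    have hn1 : (⌈(2*C/(α-1))^2⌉₊ + 1 : ℕ) ≤ n := le_trans (le_max_right _ _) hn
    have hnpos : (0:ℝ) < n := by
      have : 1 ≤ n := le_trans (Nat.le_add_left 1 _) hn1
      exact_mod_cast this
    have hsq : 0 < Real.sqrt n := Real.sqrt_pos.2 hnpos
    have hsmall : C / Real.sqrt n ≤ (α - 1) / 2 := by
      have hcast : ((2*C/(α-1))^2 : ℝ) ≤ (n : ℝ) := by
        calc ((2*C/(α-1))^2 : ℝ) ≤ (⌈(2*C/(α-1))^2⌉₊ : ℕ) := Nat.le_ceil _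
        _ ≤ (n : ℝ) := by exact_mod_cast le_trans (Nat.le_succ _) hn1
      have hsqge : 2*C/(α-1) ≤ Real.sqrt n := by
        have h0 : (0:ℝ) ≤ 2*C/(α-1) := by positivity
        calc 2*C/(α-1) = Real.sqrt ((2*C/(α-1))^2) := (Real.sqrt_sq h0).symm
        _ ≤ Real.sqrt n := Real.sqrt_le_sqrt hcast
      rw [div_le_iff₀ hsq]
      have h2C : (α - 1) / 2 * (2 * C / (α - 1)) = C := by field_simp
      nlinarith [mul_le_mul_of_nonneg_left hsqge (by linarith : (0:ℝ) ≤ (α - 1) / 2)]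
    refine lt_of_le_of_lt (measure_mono ?_) (hN n hnN)
    intro ω hω
    simp only [Set.mem_setOf_eq] at hω ⊢
    by_contra hcon
    push_neg at hcon
    set b := αhat n ω with hb
    have hd : |b - α| ≤ C / Real.sqrt n := hcon
    have habs := abs_le.1 hd
    have key : (⨆ x : Set.Ici xmin, |plCDF α xmin (x:ℝ) - plCDF b xmin (x:ℝ)|) ≤
        |b - α| * K := by
      rcases le_total α b with h1 | h1
      · refine (sup_bound hxmin hα h1).trans ?_
        rw [abs_of_nonneg (sub_nonneg.2 h1), hK]
        have hdiff : (b - α) * (2 / (Real.exp 1 * (α - 1))) -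
            (b - α) / (Real.exp 1 * (α - 1)) = (b - α) / (Real.exp 1 * (α - 1)) := by
          field_simp; ring
        have hpos : 0 ≤ (b - α) / (Real.exp 1 * (α - 1)) :=
          div_nonneg (by linarith) hE.le
        linarith
      · have hb1 : (α + 1) / 2 ≤ b := by linarith
        have hbgt : 1 < b := by linarith
        have heq : (⨆ x : Set.Ici xmin, |plCDF α xmin (x:ℝ) - plCDF b xmin (x:ℝ)|) =
            ⨆ x : Set.Ici xmin, |plCDF b xmin (x:ℝ) - plCDF α xmin (x:ℝ)| := by
          congr 1; funext x; rw [abs_sub_comm]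
        rw [heq]
        refine (sup_bound hxmin hbgt h1).trans ?_
        rw [abs_of_nonpos (sub_nonpos.2 h1), hK]
        have hEb : 0 < Real.exp 1 * (b - 1) := mul_pos (Real.exp_pos 1) (by linarith)
        have hnum : 0 ≤ α - b := by linarith
        calc (α - b) / (Real.exp 1 * (b - 1))
            ≤ (α - b) / (Real.exp 1 * ((α-1)/2)) := by
              have he : 0 < Real.exp 1 := Real.exp_pos 1
              apply div_le_div_of_nonneg_left hnum
                (mul_pos he (by linarith : (0:ℝ) < (α - 1) / 2))
              nlinarith
        _ = -(b - α) * (2 / (Real.exp 1 * (α - 1))) := by field_simp; ring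
    have hle : (⨆ x : Set.Ici xmin, |plCDF α xmin (x:ℝ) - plCDF b xmin (x:ℝ)|) ≤
        (C * K + 1) / Real.sqrt n := by
      calc (⨆ x : Set.Ici xmin, |plCDF α xmin (x:ℝ) - plCDF b xmin (x:ℝ)|)
          ≤ |b - α| * K := key
      _ ≤ (C / Real.sqrt n) * K := mul_le_mul_of_nonneg_right hd hKpos.le
      _ = (C * K) / Real.sqrt n := by ring
      _ ≤ (C * K + 1) / Real.sqrt n := by gcongr; linarith
    exact absurd hω (not_lt.2 hle)
end

section
/- Let p ∈ ℝ^n be a probability vector (p_k ≥ 0 for all k and Σ_k p_k = 1). Then for every v ∈ ℝ^n, the quadratic form of the matrix H = diag(p) − p·pᵀ satisfies 0 ≤ vᵀ H v = Σ_k p_k v_k² − (Σ_k p_k v_k)² ≤ (1/2)·‖v‖₂². In particular H is positive semidefinite with all eigenvalues in [0, 1/2]. -/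
open Matrix Finset

private lemma stmt13_quad_eq {n : ℕ} (p v : Fin n → ℝ) :
    v ⬝ᵥ (Matrix.diagonal p - Matrix.vecMulVec p p) *ᵥ v =
      (∑ k, p k * v k ^ 2) - (∑ k, p k * v k) ^ 2 := by
  rw [sub_mulVec, dotProduct_sub]
  congr 1
  · simp [dotProduct, mulVec_diagonal]
    exact Finset.sum_congr rfl fun k _ => by ring
  · rw [sq, Finset.sum_mul_sum]
    simp [dotProduct, mulVec, vecMulVec_apply, Finset.mul_sum]
    exact Finset.sum_congr rfl fun k _ => Finset.sum_congr rfl fun j _ => by ring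

private lemma stmt13_var_nonneg {n : ℕ} (p v : Fin n → ℝ) (hp : ∀ k, 0 ≤ p k)
    (hsum : ∑ k, p k = 1) :
    (∑ k, p k * v k) ^ 2 ≤ ∑ k, p k * v k ^ 2 := by
  have h := Finset.sum_mul_sq_le_sq_mul_sq Finset.univ
    (fun k => Real.sqrt (p k)) (fun k => Real.sqrt (p k) * v k)
  have e1 : ∀ k : Fin n, Real.sqrt (p k) * (Real.sqrt (p k) * v k) = p k * v k := by
    intro k; rw [← mul_assoc, Real.mul_self_sqrt (hp k)]
  have e2 : ∀ k : Fin n, Real.sqrt (p k) ^ 2 = p k := fun k => Real.sq_sqrt (hp k)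
  have e3 : ∀ k : Fin n, (Real.sqrt (p k) * v k) ^ 2 = p k * v k ^ 2 := by
    intro k; rw [mul_pow, e2]
  simp only [e1, e2, e3, hsum, one_mul] at h
  exact h

private lemma stmt13_var_le {n : ℕ} (p v : Fin n → ℝ) (hp : ∀ k, 0 ≤ p k)
    (hsum : ∑ k, p k = 1) (hn : Nonempty (Fin n)) :
    (∑ k, p k * v k ^ 2) - (∑ k, p k * v k) ^ 2 ≤ (1 / 2) * ∑ k, v k ^ 2 := by
  obtain ⟨i, hi⟩ := Finite.exists_max v
  obtain ⟨j, hj⟩ := Finite.exists_min v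
  set c : ℝ := (v i + v j) / 2 with hc
  have key : (∑ k, p k * v k ^ 2) - (∑ k, p k * v k) ^ 2
      = (∑ k, p k * (v k - c) ^ 2) - ((∑ k, p k * v k) - c) ^ 2 := by
    have : ∑ k, p k * (v k - c) ^ 2
        = (∑ k, p k * v k ^ 2) - 2 * c * (∑ k, p k * v k) + c ^ 2 := by
      have : ∀ k : Fin n, p k * (v k - c) ^ 2
          = p k * v k ^ 2 - 2 * c * (p k * v k) + c ^ 2 * p k := by intro k; ring
      simp only [this, Finset.sum_add_distrib, Finset.sum_sub_distrib, ← Finset.mul_sum, hsum]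
      ring
    rw [this]; ring
  rw [key]
  have h1 : (∑ k, p k * (v k - c) ^ 2) - ((∑ k, p k * v k) - c) ^ 2
      ≤ ∑ k, p k * (v k - c) ^ 2 := by nlinarith [sq_nonneg ((∑ k, p k * v k) - c)]
  refine h1.trans ?_
  have hbd : ∀ k : Fin n, (v k - c) ^ 2 ≤ ((v i - v j) / 2) ^ 2 := by
    intro k
    have h1 := hi k
    have h2 := hj k
    have : |v k - c| ≤ (v i - v j) / 2 := by
      rw [abs_le]; constructor <;> simp only [hc] <;> linarith
    calc (v k - c) ^ 2 = |v k - c| ^ 2 := (sq_abs _).symm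
      _ ≤ ((v i - v j) / 2) ^ 2 := by
          apply pow_le_pow_left₀ (abs_nonneg _) this
  have h2 : ∑ k, p k * (v k - c) ^ 2 ≤ ((v i - v j) / 2) ^ 2 := by
    calc ∑ k, p k * (v k - c) ^ 2 ≤ ∑ k, p k * ((v i - v j) / 2) ^ 2 := by
          apply Finset.sum_le_sum
          intro k _
          exact mul_le_mul_of_nonneg_left (hbd k) (hp k)
      _ = ((v i - v j) / 2) ^ 2 := by rw [← Finset.sum_mul, hsum, one_mul]
  refine h2.trans ?_
  rcases eq_or_ne i j with h | h
  · have : v i = v j := by rw [h]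
    have hs : 0 ≤ ∑ k, v k ^ 2 := Finset.sum_nonneg fun k _ => sq_nonneg _
    rw [this]; simp; linarith
  · have hij : v i ^ 2 + v j ^ 2 ≤ ∑ k, v k ^ 2 := by
      have := Finset.sum_le_sum_of_subset_of_nonneg
        (Finset.subset_univ {i, j}) (fun k _ _ => sq_nonneg (v k))
      rwa [Finset.sum_pair h] at this
    nlinarith [sq_nonneg (v i + v j)]

private lemma stmt13_herm {n : ℕ} (p : Fin n → ℝ) :
    (Matrix.diagonal p - Matrix.vecMulVec p p).IsHermitian := by
  unfold Matrix.IsHermitian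
  ext i j
  simp [Matrix.conjTranspose_apply, Matrix.diagonal_apply, Matrix.vecMulVec_apply, mul_comm]
  rcases eq_or_ne i j with h | h
  · simp [h]
  · simp [h, Ne.symm h]

/-- For a probability vector `p`, the matrix `H = diag(p) − p·pᵀ` (the Hessian of the
cross-entropy loss) satisfies `0 ≤ vᵀHv = Σ_k p_k v_k² − (Σ_k p_k v_k)² ≤ (1/2)‖v‖₂²`
for every `v`; in particular `H` is positive semidefinite with all eigenvalues in `[0, 1/2]`. -/
theorem stmt13 (n : ℕ) (p : Fin n → ℝ) (hp : ∀ k, 0 ≤ p k) (hsum : ∑ k, p k = 1) :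
    (∀ v : Fin n → ℝ,
      v ⬝ᵥ (Matrix.diagonal p - Matrix.vecMulVec p p) *ᵥ v =
        (∑ k, p k * v k ^ 2) - (∑ k, p k * v k) ^ 2 ∧
      0 ≤ v ⬝ᵥ (Matrix.diagonal p - Matrix.vecMulVec p p) *ᵥ v ∧
      v ⬝ᵥ (Matrix.diagonal p - Matrix.vecMulVec p p) *ᵥ v ≤ (1 / 2) * ∑ k, v k ^ 2) ∧
    (Matrix.diagonal p - Matrix.vecMulVec p p).PosSemidef ∧
    (∀ (hH : (Matrix.diagonal p - Matrix.vecMulVec p p).IsHermitian) (i : Fin n),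
      hH.eigenvalues i ∈ Set.Icc (0 : ℝ) (1 / 2)) := by
  have hn : Nonempty (Fin n) := by
    rcases Nat.eq_zero_or_pos n with h | h
    · subst h; simp at hsum
    · exact ⟨⟨0, h⟩⟩
  have hquad : ∀ v : Fin n → ℝ,
      v ⬝ᵥ (Matrix.diagonal p - Matrix.vecMulVec p p) *ᵥ v =
        (∑ k, p k * v k ^ 2) - (∑ k, p k * v k) ^ 2 ∧
      0 ≤ v ⬝ᵥ (Matrix.diagonal p - Matrix.vecMulVec p p) *ᵥ v ∧
      v ⬝ᵥ (Matrix.diagonal p - Matrix.vecMulVec p p) *ᵥ v ≤ (1 / 2) * ∑ k, v k ^ 2 := by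
    intro v
    refine ⟨stmt13_quad_eq p v, ?_, ?_⟩
    · rw [stmt13_quad_eq p v]
      have := stmt13_var_nonneg p v hp hsum
      linarith
    · rw [stmt13_quad_eq p v]
      exact stmt13_var_le p v hp hsum hn
  refine ⟨hquad, ⟨stmt13_herm p, ?_⟩, ?_⟩
  · intro x
    have := (hquad x).2.1
    exact (Matrix.posSemidef_iff_dotProduct_mulVec.mpr ⟨stmt13_herm p, fun v => by simpa using (hquad v).2.1⟩).2 x
  · intro hH i
    set M := Matrix.diagonal p - Matrix.vecMulVec p p with hM
    set w : Fin n → ℝ := (WithLp.equiv 2 (Fin n → ℝ)) (hH.eigenvectorBasis i) with hw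
    have hmv : M *ᵥ w = hH.eigenvalues i • w := hH.mulVec_eigenvectorBasis i
    have hnorm : ‖hH.eigenvectorBasis i‖ = 1 := hH.eigenvectorBasis.orthonormal.1 i
    have hsum1 : ∑ k, w k ^ 2 = 1 := by
      have hne := EuclideanSpace.norm_eq (hH.eigenvectorBasis i)
      rw [hnorm] at hne
      have h2 : ∑ k, ‖(hH.eigenvectorBasis i) k‖ ^ 2 = 1 := by
        nlinarith [Real.sq_sqrt (show (0:ℝ) ≤ ∑ k, ‖(hH.eigenvectorBasis i) k‖ ^ 2 from
          Finset.sum_nonneg fun k _ => sq_nonneg _)]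
      calc ∑ k, w k ^ 2 = ∑ k, ‖(hH.eigenvectorBasis i) k‖ ^ 2 := by
            apply Finset.sum_congr rfl; intro k _
            rw [Real.norm_eq_abs, sq_abs]; rfl
        _ = 1 := h2
    have hval : w ⬝ᵥ M *ᵥ w = hH.eigenvalues i := by
      rw [hmv, dotProduct_smul]
      have hww : w ⬝ᵥ w = ∑ k, w k ^ 2 := by simp [dotProduct, sq]
      rw [smul_eq_mul, hww, hsum1, mul_one]
    obtain ⟨_, hlo, hhi⟩ := hquad w
    constructor
    · rw [← hval]; exact hlo
    · rw [← hval]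
      calc w ⬝ᵥ M *ᵥ w ≤ (1 / 2) * ∑ k, w k ^ 2 := hhi
        _ = 1 / 2 := by rw [hsum1, mul_one]
end

section
/- The softmax map from ℝ^n to ℝ^n, defined by softmax(z)_k = e^{z_k} / Σ_j e^{z_j}, is Lipschitz continuous with constant 1/2 with respect to the Euclidean norm: for all z₁, z₂ ∈ ℝ^n, ‖softmax(z₁) − softmax(z₂)‖₂ ≤ (1/2)·‖z₁ − z₂‖₂. Consequently, for any class index y, the gradient of the cross-entropy loss ℓ(·, y) is (1/2)-Lipschitz. -/
/-!
The Jacobian of softmax at `z` is `diag p - p pᵀ` with `p = softmax z` a probability vector.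
Row `i` of this symmetric matrix has absolute sum `p i (1 - p i) + p i ∑_{j ≠ i} p j
= 2 p i (1 - p i) ≤ 1/2`, so by the Schur test its spectral norm is at most `1/2`, and the
mean value inequality makes softmax `1/2`-Lipschitz. The gradient of the cross-entropy loss
`log ∑ exp - z_y` is `softmax - e_y`, a translate of softmax.
-/

open Real Finset

noncomputable def softmaxFun (n : ℕ) (z : EuclideanSpace ℝ (Fin n)) : EuclideanSpace ℝ (Fin n) :=
  (WithLp.equiv 2 (Fin n → ℝ)).symm fun k => Real.exp (z k) / (∑ j, Real.exp (z j))

section SchurTest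

open Matrix

theorem sum_sq_mulVec_le_of_sum_abs_le {m ι : Type*} [Fintype m] [Fintype ι]
    (A : Matrix m ι ℝ) (v : ι → ℝ) {r c : ℝ} (hr : 0 ≤ r)
    (hrow : ∀ i, ∑ j, |A i j| ≤ r) (hcol : ∀ j, ∑ i, |A i j| ≤ c) :
    ∑ i, (A *ᵥ v) i ^ 2 ≤ r * c * ∑ j, v j ^ 2 := by
  have hrow_sq (i : m) : (A *ᵥ v) i ^ 2 ≤ r * ∑ j, |A i j| * v j ^ 2 := calc
    (A *ᵥ v) i ^ 2 ≤ (∑ j, |A i j|) * ∑ j, |A i j| * v j ^ 2 :=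
      sum_sq_le_sum_mul_sum_of_sq_le_mul _ (fun _ _ => abs_nonneg _)
        (fun _ _ => by positivity) fun j _ => by
          rw [mul_pow, ← sq_abs (A i j)]; exact (by ring : _ = _).le
    _ ≤ r * ∑ j, |A i j| * v j ^ 2 :=
      mul_le_mul_of_nonneg_right (hrow i) (sum_nonneg fun _ _ => by positivity)
  calc ∑ i, (A *ᵥ v) i ^ 2 ≤ ∑ i, r * ∑ j, |A i j| * v j ^ 2 := sum_le_sum fun i _ => hrow_sq i
    _ = r * ∑ j, (∑ i, |A i j|) * v j ^ 2 := by
      rw [← mul_sum, sum_comm]; simp_rw [sum_mul]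
    _ ≤ r * ∑ j, c * v j ^ 2 := by gcongr with j; exact hcol j
    _ = r * c * ∑ j, v j ^ 2 := by rw [← mul_sum, mul_assoc]

theorem norm_toEuclideanCLM_le_of_sum_abs_le {ι : Type*} [Fintype ι] [DecidableEq ι]
    (A : Matrix ι ι ℝ) {r : ℝ} (hr : 0 ≤ r)
    (hrow : ∀ i, ∑ j, |A i j| ≤ r) (hcol : ∀ j, ∑ i, |A i j| ≤ r) :
    ‖toEuclideanCLM (𝕜 := ℝ) A‖ ≤ r := by
  refine ContinuousLinearMap.opNorm_le_bound _ hr fun v => ?_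
  rw [EuclideanSpace.norm_eq, EuclideanSpace.norm_eq, ← sqrt_sq hr, ← sqrt_mul (sq_nonneg r)]
  refine sqrt_le_sqrt ?_
  simpa only [Real.norm_eq_abs, sq_abs, ofLp_toEuclideanCLM, ← sq]
    using sum_sq_mulVec_le_of_sum_abs_le A v.ofLp hr hrow hcol

end SchurTest

section SoftmaxJacobian

open Matrix

variable {ι : Type*} [DecidableEq ι]

def softmaxJacobian (p : ι → ℝ) : Matrix ι ι ℝ := diagonal p - vecMulVec p p

theorem softmaxJacobian_apply (p : ι → ℝ) (i j : ι) :
    softmaxJacobian p i j = p i * ((if i = j then 1 else 0) - p j) := by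
  simp only [softmaxJacobian, Matrix.sub_apply, diagonal_apply, vecMulVec_apply]
  split_ifs <;> ring

theorem softmaxJacobian_mulVec [Fintype ι] (p v : ι → ℝ) :
    softmaxJacobian p *ᵥ v = fun i => p i * (v i - p ⬝ᵥ v) := by
  ext i
  simp only [softmaxJacobian, sub_mulVec, vecMulVec_mulVec, Pi.sub_apply, mulVec_diagonal,
    Pi.smul_apply, op_smul_eq_mul]
  ring

theorem isSymm_softmaxJacobian (p : ι → ℝ) : (softmaxJacobian p).IsSymm :=
  (isSymm_diagonal p).sub (IsSymm.ext fun i j => by simp [vecMulVec_apply, mul_comm])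

variable [Fintype ι]

theorem sum_abs_softmaxJacobian {p : ι → ℝ} (hp : ∀ i, 0 ≤ p i) (hsum : ∑ i, p i = 1) (i : ι) :
    ∑ j, |softmaxJacobian p i j| = 2 * p i * (1 - p i) := by
  have hpi : p i ≤ 1 := hsum ▸ single_le_sum (fun j _ => hp j) (mem_univ i)
  have habs (j : ι) :
      |(if i = j then 1 else 0) - p j| = p j + if i = j then 1 - 2 * p j else 0 := by
    split_ifs with h
    · subst h; rw [abs_of_nonneg (by linarith)]; ring
    · rw [zero_sub, abs_neg, abs_of_nonneg (hp j), add_zero]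
  simp_rw [softmaxJacobian_apply, abs_mul, abs_of_nonneg (hp i), habs, ← mul_sum, sum_add_distrib,
    sum_ite_eq, if_pos (mem_univ i), hsum]
  ring

theorem norm_toEuclideanCLM_softmaxJacobian_le {p : ι → ℝ} (hp : ∀ i, 0 ≤ p i)
    (hsum : ∑ i, p i = 1) : ‖toEuclideanCLM (𝕜 := ℝ) (softmaxJacobian p)‖ ≤ 1 / 2 := by
  have hrow (i : ι) : ∑ j, |softmaxJacobian p i j| ≤ 1 / 2 := by
    rw [sum_abs_softmaxJacobian hp hsum]; nlinarith [sq_nonneg (2 * p i - 1)]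
  refine norm_toEuclideanCLM_le_of_sum_abs_le _ (by norm_num) hrow fun j => ?_
  simpa only [(isSymm_softmaxJacobian p).apply] using hrow j

end SoftmaxJacobian

theorem HasGradientAt.sub {F : Type*} [NormedAddCommGroup F] [InnerProductSpace ℝ F]
    [CompleteSpace F] {f g : F → ℝ} {f' g' x : F} (hf : HasGradientAt f f' x)
    (hg : HasGradientAt g g' x) : HasGradientAt (fun x => f x - g x) (f' - g') x := by
  rw [hasGradientAt_iff_hasFDerivAt, map_sub]
  exact hf.hasFDerivAt.sub hg.hasFDerivAt

theorem EuclideanSpace.hasGradientAt_apply {ι : Type*} [Fintype ι] [DecidableEq ι]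
    (z : EuclideanSpace ℝ ι) (i : ι) :
    HasGradientAt (fun z : EuclideanSpace ℝ ι => z i) (EuclideanSpace.single i 1) z := by
  rw [hasGradientAt_iff_hasFDerivAt]
  refine (PiLp.hasFDerivAt_apply (𝕜 := ℝ) 2 z i).congr_fderiv
    (ContinuousLinearMap.ext fun v => ?_)
  simp [EuclideanSpace.inner_single_left i 1 v]

section Softmax

variable {n : ℕ}

theorem softmaxFun_apply (z : EuclideanSpace ℝ (Fin n)) (k : Fin n) :
    softmaxFun n z k = exp (z k) / ∑ j, exp (z j) := rfl

theorem softmaxFun_nonneg (z : EuclideanSpace ℝ (Fin n)) (k : Fin n) : 0 ≤ softmaxFun n z k := by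
  rw [softmaxFun_apply]; positivity

variable [NeZero n]

theorem sum_exp_pos (z : EuclideanSpace ℝ (Fin n)) : 0 < ∑ j, exp (z j) :=
  sum_pos (fun j _ => exp_pos (z j)) univ_nonempty

theorem sum_softmaxFun (z : EuclideanSpace ℝ (Fin n)) : ∑ k, softmaxFun n z k = 1 := by
  simp_rw [softmaxFun_apply, ← sum_div, div_self (sum_exp_pos z).ne']

theorem softmaxFun_apply_eq_exp_sub_log (z : EuclideanSpace ℝ (Fin n)) (k : Fin n) :
    softmaxFun n z k = exp (z k - log (∑ j, exp (z j))) := by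
  rw [softmaxFun_apply, exp_sub, exp_log (sum_exp_pos z)]

theorem hasGradientAt_log_sum_exp (z : EuclideanSpace ℝ (Fin n)) :
    HasGradientAt (fun z : EuclideanSpace ℝ (Fin n) => log (∑ j, exp (z j)))
      (softmaxFun n z) z := by
  have hsum : HasFDerivAt (fun z : EuclideanSpace ℝ (Fin n) => ∑ j, exp (z j))
      (∑ j, exp (z j) • PiLp.proj 2 (fun _ => ℝ) j) z :=
    HasFDerivAt.fun_sum fun j _ => (PiLp.hasFDerivAt_apply 2 z j).exp
  rw [hasGradientAt_iff_hasFDerivAt]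
  refine (hsum.log (sum_exp_pos z).ne').congr_fderiv (ContinuousLinearMap.ext fun v => ?_)
  simp only [_root_.smul_apply, _root_.sum_apply, PiLp.proj_apply, smul_eq_mul,
    InnerProductSpace.toDual_apply_apply, PiLp.inner_apply, RCLike.inner_apply, conj_trivial,
    softmaxFun_apply, mul_sum]
  exact sum_congr rfl fun j _ => by ring

theorem hasFDerivAt_softmaxFun (z : EuclideanSpace ℝ (Fin n)) :
    HasFDerivAt (softmaxFun n)
      (Matrix.toEuclideanCLM (𝕜 := ℝ) (softmaxJacobian (softmaxFun n z).ofLp)) z := by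
  rw [← hasFDerivWithinAt_univ, hasFDerivWithinAt_piLp]
  intro k
  rw [hasFDerivWithinAt_univ]
  have hk := ((PiLp.hasFDerivAt_apply (𝕜 := ℝ) 2 z k).fun_sub
    (hasGradientAt_log_sum_exp z).hasFDerivAt).exp
  simp only [← softmaxFun_apply_eq_exp_sub_log] at hk
  refine hk.congr_fderiv (ContinuousLinearMap.ext fun v => ?_)
  simp [softmaxJacobian_mulVec, PiLp.inner_apply, dotProduct, mul_comm]

theorem lipschitzWith_softmaxFun : LipschitzWith (1 / 2) (softmaxFun n) := by
  refine lipschitzWith_of_nnnorm_fderiv_le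
    (fun z => (hasFDerivAt_softmaxFun z).differentiableAt) fun z => ?_
  rw [(hasFDerivAt_softmaxFun z).fderiv, ← NNReal.coe_le_coe, coe_nnnorm]
  exact (norm_toEuclideanCLM_softmaxJacobian_le (softmaxFun_nonneg z) (sum_softmaxFun z)).trans
    (by norm_num)

theorem hasGradientAt_crossEntropy (y : Fin n) (z : EuclideanSpace ℝ (Fin n)) :
    HasGradientAt (fun z : EuclideanSpace ℝ (Fin n) => log (∑ j, exp (z j)) - z y)
      (softmaxFun n z - EuclideanSpace.single y 1) z :=
  (hasGradientAt_log_sum_exp z).sub (EuclideanSpace.hasGradientAt_apply z y)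

end Softmax

/-- The softmax map is `1/2`-Lipschitz in the Euclidean norm; consequently, for every class
index `y`, the gradient of the cross-entropy loss `ℓ(·, y)` is `1/2`-Lipschitz. -/
theorem stmt14 (n : ℕ) (hn : 1 ≤ n) :
    LipschitzWith (1 / 2) (softmaxFun n) ∧
    ∀ y : Fin n,
      LipschitzWith (1 / 2)
        (gradient fun z : EuclideanSpace ℝ (Fin n) =>
          Real.log (∑ j, Real.exp (z j)) - z y) := by
  have : NeZero n := ⟨by omega⟩
  refine ⟨lipschitzWith_softmaxFun, fun y => ?_⟩
  have hgrad : (gradient fun z : EuclideanSpace ℝ (Fin n) => log (∑ j, exp (z j)) - z y) =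
      fun z => softmaxFun n z - EuclideanSpace.single y 1 :=
    funext fun z => (hasGradientAt_crossEntropy y z).gradient
  rw [hgrad]
  exact LipschitzWith.of_dist_le_mul fun a b => by
    rw [dist_sub_right]
    exact lipschitzWith_softmaxFun.dist_le_mul a b
end

section
/- Let E be a real inner product space, and let f : E → ℝ be convex and differentiable with L-Lipschitz gradient (L > 0). Let x* ∈ E be a global minimizer of f, fix a step size 0 < η ≤ 1/L, and define the gradient descent iterates by x_{t+1} = x_t − η·∇f(x_t) starting from any x₀ ∈ E. Then for every t ≥ 1, f(x_t) − f(x*) ≤ ‖x₀ − x*‖² / (2·η·t); in particular f(x_t) − f(x*) = O(1/t). -/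
open Real RealInnerProductSpace

/-!
Convexity gives `f y - f z ≤ ⟪∇f y, y - z⟫`, and the quadratic upper bound
`f v ≤ f u + ⟪∇f u, v - u⟫ + L/2 ‖v - u‖²` coming from the Lipschitz gradient shows that a step
`y ↦ y - η ∇f y` with `η ≤ 1/L` decreases `f` by at least `η/2 ‖∇f y‖²`. Expanding
`‖y - η ∇f y - z‖²` and combining the two yields
`2η (f x_{t+1} - f x*) ≤ ‖x_t - x*‖² - ‖x_{t+1} - x*‖²`. Since `f x_t` is nonincreasing, summing
this telescoping bound over the first `t` steps gives `2ηt (f x_t - f x*) ≤ ‖x_0 - x*‖²`.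
-/

section Normed

variable {E : Type*} [NormedAddCommGroup E] [NormedSpace ℝ E] {f : E → ℝ}

open AffineMap

lemma ConvexOn.add_fderiv_sub_le {f' : E →L[ℝ] ℝ} (hconv : ConvexOn ℝ Set.univ f) {u : E}
    (hf : HasFDerivAt f f' u) (v : E) : f u + f' (v - u) ≤ f v := by
  let γ : ℝ →ᵃ[ℝ] E := lineMap u v
  have hline : ConvexOn ℝ Set.univ (f ∘ γ) := hconv.comp_affineMap γ
  have hderiv : HasDerivAt (f ∘ γ) (f' (v - u)) 0 :=
    hf.comp_hasDerivAt_of_eq 0 hasDerivAt_lineMap (lineMap_apply_zero u v).symm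
  have := hline.le_slope_of_hasDerivAt (Set.mem_univ 0) (Set.mem_univ 1) zero_lt_one hderiv
  rwa [slope_def_field, sub_zero, div_one, Function.comp_apply, Function.comp_apply,
    lineMap_apply_one, lineMap_apply_zero, le_sub_iff_add_le'] at this

lemma le_add_fderiv_sub_add_sq_of_lipschitz {f' : E → E →L[ℝ] ℝ} {L : ℝ}
    (hf : ∀ x, HasFDerivAt f (f' x) x) (hlip : ∀ u v, ‖f' u - f' v‖ ≤ L * ‖u - v‖) (u v : E) :
    f v ≤ f u + f' u (v - u) + L / 2 * ‖v - u‖ ^ 2 := by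
  have hderiv (t : ℝ) : HasDerivAt (f ∘ lineMap u v) (f' (lineMap u v t) (v - u)) t :=
    (hf _).comp_hasDerivAt t hasDerivAt_lineMap
  have hbound : ∀ t ∈ Set.Ico (0 : ℝ) 1,
      f' (lineMap u v t) (v - u) ≤ f' u (v - u) + L * t * ‖v - u‖ ^ 2 := by
    intro t ht
    have hdist : ‖lineMap u v t - u‖ = t * ‖v - u‖ := by
      rw [← vsub_eq_sub, lineMap_vsub_left, norm_smul, Real.norm_of_nonneg ht.1, vsub_eq_sub]
    calc f' (lineMap u v t) (v - u) = f' u (v - u) + (f' (lineMap u v t) - f' u) (v - u) := by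
          simp
      _ ≤ f' u (v - u) + ‖f' (lineMap u v t) - f' u‖ * ‖v - u‖ := by
          gcongr; exact (le_abs_self _).trans ((f' (lineMap u v t) - f' u).le_opNorm _)
      _ ≤ f' u (v - u) + L * (t * ‖v - u‖) * ‖v - u‖ := by
          gcongr; exact hdist ▸ hlip _ _
      _ = f' u (v - u) + L * t * ‖v - u‖ ^ 2 := by ring
  -- Compare `f` along the segment with the quadratic that agrees with it at `u` and has the
  -- larger derivative on `[0, 1)`.
  have hquad (t : ℝ) : HasDerivAt (fun s => f u + s * f' u (v - u) + L / 2 * s ^ 2 * ‖v - u‖ ^ 2)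
      (f' u (v - u) + L * t * ‖v - u‖ ^ 2) t :=
    ((((hasDerivAt_id t).mul_const _).const_add _).add
      (((hasDerivAt_pow 2 t).const_mul (L / 2)).mul_const _)).congr_deriv (by push_cast; ring)
  simpa using image_le_of_deriv_right_le_deriv_boundary
    (fun t _ => (hderiv t).continuousAt.continuousWithinAt) (fun t _ => (hderiv t).hasDerivWithinAt)
    (by simp) (by fun_prop) (fun t _ => (hquad t).hasDerivWithinAt) hbound
    (Set.right_mem_Icc.2 zero_le_one)

end Normed

section Gradient

variable {E : Type*} [NormedAddCommGroup E] [InnerProductSpace ℝ E] {f : E → ℝ} {f' : E → E}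

lemma apply_sub_smul_gradient_le (hf : ∀ x, HasFDerivAt f (innerSL ℝ (f' x)) x) {L η : ℝ}
    (hlip : ∀ u v, ‖f' u - f' v‖ ≤ L * ‖u - v‖) (hη : 0 ≤ η) (hLη : L * η ≤ 1) (y : E) :
    f (y - η • f' y) ≤ f y - η / 2 * ‖f' y‖ ^ 2 := by
  have hlip' (u v : E) : ‖innerSL ℝ (f' u) - innerSL ℝ (f' v)‖ ≤ L * ‖u - v‖ := by
    rw [← map_sub, innerSL_apply_norm]; exact hlip u v
  have h := le_add_fderiv_sub_add_sq_of_lipschitz hf hlip' y (y - η • f' y)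
  rw [sub_sub_cancel_left, innerSL_apply_apply, inner_neg_right, real_inner_smul_right,
    real_inner_self_eq_norm_sq, norm_neg, norm_smul, Real.norm_of_nonneg hη] at h
  nlinarith [mul_le_mul_of_nonneg_right hLη (mul_nonneg hη (sq_nonneg ‖f' y‖))]

lemma two_mul_sub_le_of_gradient_step (hconv : ConvexOn ℝ Set.univ f)
    (hf : ∀ x, HasFDerivAt f (innerSL ℝ (f' x)) x) {L η : ℝ}
    (hlip : ∀ u v, ‖f' u - f' v‖ ≤ L * ‖u - v‖) (hη : 0 ≤ η) (hLη : L * η ≤ 1) (y z : E) :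
    2 * η * (f (y - η • f' y) - f z) ≤ ‖y - z‖ ^ 2 - ‖y - η • f' y - z‖ ^ 2 := by
  have hgrad := hconv.add_fderiv_sub_le (hf y) z
  have hdecr := apply_sub_smul_gradient_le hf hlip hη hLη y
  have hexpand : ‖y - η • f' y - z‖ ^ 2 =
      ‖y - z‖ ^ 2 - 2 * η * ⟪f' y, y - z⟫ + η ^ 2 * ‖f' y‖ ^ 2 := by
    rw [sub_right_comm, norm_sub_sq_real, real_inner_smul_right, norm_smul,
      Real.norm_of_nonneg hη, real_inner_comm]
    ring
  have hinner : ⟪f' y, z - y⟫ = -⟪f' y, y - z⟫ := by rw [← inner_neg_right, neg_sub]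
  rw [innerSL_apply_apply, hinner] at hgrad
  nlinarith

end Gradient

lemma nat_mul_le_of_antitone_of_le_sub {a D : ℕ → ℝ} (ha : Antitone a)
    (h : ∀ t, a (t + 1) ≤ D t - D (t + 1)) {n : ℕ} (hD : 0 ≤ D n) : n * a n ≤ D 0 :=
  calc n * a n = ∑ _t ∈ Finset.range n, a n := by simp
    _ ≤ ∑ t ∈ Finset.range n, a (t + 1) :=
        Finset.sum_le_sum fun t ht => ha (Finset.mem_range.1 ht)
    _ ≤ ∑ t ∈ Finset.range n, (D t - D (t + 1)) := Finset.sum_le_sum fun t _ => h t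
    _ = D 0 - D n := Finset.sum_range_sub' D n
    _ ≤ D 0 := sub_le_self _ hD

theorem stmt19_general {E : Type*} [NormedAddCommGroup E] [InnerProductSpace ℝ E]
    (f : E → ℝ) (f' : E → E) (L : ℝ) (hL : 0 < L)
    (hconv : ConvexOn ℝ Set.univ f)
    (hf : ∀ x, HasFDerivAt f (innerSL ℝ (f' x)) x)
    (hlip : ∀ u v, ‖f' u - f' v‖ ≤ L * ‖u - v‖)
    (xstar : E)
    (η : ℝ) (hη0 : 0 < η) (hηL : η ≤ 1 / L)
    (x : ℕ → E) (hiter : ∀ t, x (t + 1) = x t - η • f' (x t)) :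
    ∀ t : ℕ, 1 ≤ t → f (x t) - f xstar ≤ ‖x 0 - xstar‖ ^ 2 / (2 * η * t) := by
  intro t ht
  have hLη : L * η ≤ 1 := by rwa [le_div_iff₀ hL, mul_comm] at hηL
  have hdecr (s : ℕ) : f (x (s + 1)) ≤ f (x s) - η / 2 * ‖f' (x s)‖ ^ 2 :=
    hiter s ▸ apply_sub_smul_gradient_le hf hlip hη0.le hLη (x s)
  have hstep (s : ℕ) : 2 * η * (f (x (s + 1)) - f xstar) ≤
      ‖x s - xstar‖ ^ 2 - ‖x (s + 1) - xstar‖ ^ 2 :=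
    hiter s ▸ two_mul_sub_le_of_gradient_step hconv hf hlip hη0.le hLη (x s) xstar
  have hanti : Antitone fun s => 2 * η * (f (x s) - f xstar) :=
    antitone_nat_of_succ_le fun s => by
      have : 0 ≤ η / 2 * ‖f' (x s)‖ ^ 2 := by positivity
      gcongr
      linarith [hdecr s]
  have := nat_mul_le_of_antitone_of_le_sub hanti hstep (sq_nonneg ‖x t - xstar‖)
  rw [le_div_iff₀ (by positivity)]
  linarith

/-- Convergence of gradient descent on a convex function with `L`-Lipschitz gradient:
with step size `0 < η ≤ 1/L` and iterates `x_{t+1} = x_t − η·∇f(x_t)`, one has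
`f(x_t) − f(x*) ≤ ‖x₀ − x*‖²/(2·η·t)` for every `t ≥ 1`, where `x*` is a global
minimizer of `f`; in particular `f(x_t) − f(x*) = O(1/t)`. -/
theorem stmt19 {E : Type*} [NormedAddCommGroup E] [InnerProductSpace ℝ E]
    (f : E → ℝ) (f' : E → E) (L : ℝ) (hL : 0 < L)
    (hconv : ConvexOn ℝ Set.univ f)
    (hf : ∀ x, HasFDerivAt f (innerSL ℝ (f' x)) x)
    (hlip : ∀ u v, ‖f' u - f' v‖ ≤ L * ‖u - v‖)
    (xstar : E) (hmin : ∀ z, f xstar ≤ f z)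
    (η : ℝ) (hη0 : 0 < η) (hηL : η ≤ 1 / L)
    (x : ℕ → E) (hiter : ∀ t, x (t + 1) = x t - η • f' (x t)) :
    ∀ t : ℕ, 1 ≤ t → f (x t) - f xstar ≤ ‖x 0 - xstar‖ ^ 2 / (2 * η * t) :=
  stmt19_general f f' L hL hconv hf hlip xstar η hη0 hηL x hiter
end
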